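/- For every n ∈ ℕ, with k = n(n−1)/2 + n, the group of order-preserving group automorphisms of ℚ^n_lex admits an essentially free orientation-preserving affine action on ℝ^k_lex. -/

import Mathlib

/-- `Fin n → R` with the lexicographic order in which the **last** coordinate is the most
significant: `x < y` iff `x ≠ y` and `x i < y i` at the largest index `i` where `x` and `y`
differ. -/
def LexPow (R : Type*) (n : ℕ) : Type _ := Fin n → R

namespace LexPow

variable {R : Type*} {n : ℕ}

/-- The identity bijection between `Fin n → R` and `LexPow R n`. -/
def of : (Fin n → R) ≃ LexPow R n := Equiv.refl _

instance : CoeFun (LexPow R n) (fun _ => Fin n → R) := ⟨fun x => x⟩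

instance [AddCommGroup R] : AddCommGroup (LexPow R n) :=
  inferInstanceAs (AddCommGroup (Fin n → R))

/-- The map reversing coordinates, into the Mathlib lexicographic order (in which the *first*
coordinate is most significant). -/
def toRevLex (x : LexPow R n) : Lex (Fin n → R) :=
  toLex (fun i : Fin n => of.symm x (Fin.rev i))

theorem toRevLex_injective : Function.Injective (toRevLex (R := R) (n := n)) := by
  intro a b hab
  refine of.symm.injective (funext fun i => ?_)
  have h := congrFun (congrArg ofLex hab) (Fin.rev i)
  simpa [toRevLex, Fin.rev_rev] using h

noncomputable instance [LinearOrder R] : LinearOrder (LexPow R n) :=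
  LinearOrder.lift' (toRevLex (R := R) (n := n)) toRevLex_injective

instance [AddCommGroup R] [LinearOrder R] [IsOrderedAddMonoid R] :
    IsOrderedAddMonoid (LexPow R n) where
  add_le_add_left := fun a b hab c => by
    show toRevLex (a + c) ≤ toRevLex (b + c)
    have h : toRevLex a ≤ toRevLex b := hab
    exact add_le_add h le_rfl

end LexPow

/-- An orientation-preserving affine automorphism of a linearly ordered abelian group `Λ`:
an order-preserving bijection `g` of `Λ` admitting an order-preserving group automorphism
`dilation` (the dilation factor) with `g x - g y = dilation (x - y)` for all `x, y`. -/
structure OPAffineAut (Λ : Type*) [AddCommGroup Λ] [LinearOrder Λ] [IsOrderedAddMonoid Λ] extends Λ ≃ Λ where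
  strictMono' : StrictMono toEquiv
  dilation : Λ ≃+ Λ
  dilation_strictMono : StrictMono dilation
  affine : ∀ x y : Λ, toEquiv x - toEquiv y = dilation (x - y)

namespace OPAffineAut

variable {Λ : Type*} [AddCommGroup Λ] [LinearOrder Λ] [IsOrderedAddMonoid Λ]

instance : CoeFun (OPAffineAut Λ) (fun _ => Λ → Λ) := ⟨fun f => f.toEquiv⟩

theorem ext' {f g : OPAffineAut Λ} (h : ∀ x, f x = g x) : f = g := by
  have he : f.toEquiv = g.toEquiv := Equiv.ext h
  have hd : f.dilation = g.dilation := AddEquiv.ext fun x => by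
    have hf := f.affine x 0
    have hg := g.affine x 0
    rw [sub_zero] at hf hg
    rw [← hf, ← hg]
    show f x - f 0 = g x - g 0
    rw [h x, h 0]
  cases f; cases g
  cases he; cases hd
  rfl

instance : Group (OPAffineAut Λ) where
  one :=
    { toEquiv := Equiv.refl Λ
      strictMono' := strictMono_id
      dilation := AddEquiv.refl Λ
      dilation_strictMono := strictMono_id
      affine := fun _ _ => rfl }
  mul f g :=
    { toEquiv := g.toEquiv.trans f.toEquiv
      strictMono' := f.strictMono'.comp g.strictMono'
      dilation := g.dilation.trans f.dilation
      dilation_strictMono := f.dilation_strictMono.comp g.dilation_strictMono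
      affine := fun x y => by
        simp only [Equiv.trans_apply, AddEquiv.trans_apply]
        rw [f.affine, g.affine] }
  inv f :=
    { toEquiv := f.toEquiv.symm
      strictMono' := fun a b hab => f.strictMono'.lt_iff_lt.1 (by
        simpa only [Equiv.apply_symm_apply] using hab)
      dilation := f.dilation.symm
      dilation_strictMono := fun a b hab => f.dilation_strictMono.lt_iff_lt.1 (by
        simpa only [AddEquiv.apply_symm_apply] using hab)
      affine := fun x y => f.dilation.injective (by
        rw [AddEquiv.apply_symm_apply, ← f.affine, Equiv.apply_symm_apply,
          Equiv.apply_symm_apply]) }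
  mul_assoc f g h := ext' fun _ => rfl
  one_mul f := ext' fun _ => rfl
  mul_one f := ext' fun _ => rfl
  inv_mul_cancel f := ext' fun x => f.toEquiv.symm_apply_apply x

@[simp] theorem mul_apply (f g : OPAffineAut Λ) (x : Λ) : (f * g) x = f (g x) := rfl
@[simp] theorem one_apply (x : Λ) : (1 : OPAffineAut Λ) x = x := rfl
@[simp] theorem inv_apply (f : OPAffineAut Λ) (x : Λ) : f⁻¹ x = f.toEquiv.symm x := rfl

/-- An affine automorphism is *hyperbolic* if it has no fixed point. -/
def Hyperbolic (f : OPAffineAut Λ) : Prop := ∀ x : Λ, f x ≠ x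

/-- An affine automorphism is *rigid* if for `ε = ±1`, whenever `f^ε` moves some point up,
it moves every point up. -/
def Rigid (f : OPAffineAut Λ) : Prop :=
  ∀ ε : ℤ, ε = 1 ∨ ε = -1 → (∃ x : Λ, x < (f ^ ε) x) → ∀ y : Λ, y < (f ^ ε) y

end OPAffineAut

/-- An orientation-preserving affine action (a homomorphism into the group of
orientation-preserving affine automorphisms) is *free* if every nontrivial group element
acts without fixed points. -/
def AffineActionFree {G Λ : Type*} [Group G] [AddCommGroup Λ] [LinearOrder Λ] [IsOrderedAddMonoid Λ]
    (ρ : G →* OPAffineAut Λ) : Prop :=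
  ∀ g : G, g ≠ 1 → ∀ x : Λ, ρ g x ≠ x

/-- An orientation-preserving affine action is *essentially free* if every nontrivial group
element acts as a rigid hyperbolic affine automorphism. -/
def AffineActionEssentiallyFree {G Λ : Type*} [Group G] [AddCommGroup Λ] [LinearOrder Λ] [IsOrderedAddMonoid Λ]
    (ρ : G →* OPAffineAut Λ) : Prop :=
  ∀ g : G, g ≠ 1 → (ρ g).Rigid ∧ (ρ g).Hyperbolic

/-- `G` admits an essentially free orientation-preserving affine action on `Λ`. -/
def HasEssentiallyFreeAffineAction (G : Type*) [Group G] (Λ : Type*)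
    [AddCommGroup Λ] [LinearOrder Λ] [IsOrderedAddMonoid Λ] : Prop :=
  ∃ ρ : G →* OPAffineAut Λ, AffineActionEssentiallyFree ρ

section Matrices

variable {R : Type*} {n : ℕ}

theorem diag_mul_of_triangular [CommRing R] {A B : Matrix (Fin n) (Fin n) R}
    (hA : A.BlockTriangular id) (hB : B.BlockTriangular id) (i : Fin n) :
    (A * B) i i = A i i * B i i := by
  rw [Matrix.mul_apply]
  apply Finset.sum_eq_single i
  · intro k _ hk
    rcases lt_or_gt_of_ne hk with h | h
    · rw [hA (show (id : Fin n → Fin n) k < id i from h), zero_mul]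
    · rw [hB (show (id : Fin n → Fin n) i < id k from h), mul_zero]
  · intro h; exact absurd (Finset.mem_univ i) h

/-- The group `UT(n,R)` of upper triangular `n × n` matrices over `R` with all diagonal
entries equal to `1`, realised as a subgroup of the group of units of the matrix ring. -/
def UT (n : ℕ) (R : Type*) [CommRing R] : Subgroup (Matrix (Fin n) (Fin n) R)ˣ where
  carrier := {A | (∀ i j : Fin n, j < i → (A : Matrix (Fin n) (Fin n) R) i j = 0) ∧
    ∀ i : Fin n, (A : Matrix (Fin n) (Fin n) R) i i = 1}
  one_mem' := by
    refine ⟨fun i j hij => ?_, fun i => ?_⟩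
    · simp [Matrix.one_apply, (ne_of_lt hij).symm]
    · simp
  mul_mem' := by
    rintro A B ⟨hA1, hA2⟩ ⟨hB1, hB2⟩
    have hA : (A : Matrix (Fin n) (Fin n) R).BlockTriangular id := fun i j h => hA1 i j h
    have hB : (B : Matrix (Fin n) (Fin n) R).BlockTriangular id := fun i j h => hB1 i j h
    refine ⟨fun i j hij => ?_, fun i => ?_⟩
    · exact (hA.mul hB) (show (id : Fin n → Fin n) j < id i from hij)
    · rw [Units.val_mul, diag_mul_of_triangular hA hB, hA2, hB2, one_mul]
  inv_mem' := by
    rintro A ⟨hA1, hA2⟩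
    have hA : (A : Matrix (Fin n) (Fin n) R).BlockTriangular id := fun i j h => hA1 i j h
    haveI := A.invertible
    have hAinv : ((A : Matrix (Fin n) (Fin n) R)⁻¹).BlockTriangular id :=
      Matrix.blockTriangular_inv_of_blockTriangular hA
    have hcoe : ((A⁻¹ : (Matrix (Fin n) (Fin n) R)ˣ) : Matrix (Fin n) (Fin n) R)
        = (A : Matrix (Fin n) (Fin n) R)⁻¹ := Matrix.coe_units_inv A
    refine ⟨fun i j hij => ?_, fun i => ?_⟩
    · rw [hcoe]; exact hAinv (show (id : Fin n → Fin n) j < id i from hij)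
    · have h1 : ((A : Matrix (Fin n) (Fin n) R) * (A : Matrix (Fin n) (Fin n) R)⁻¹) i i = 1 := by
        rw [Matrix.mul_inv_of_invertible]; simp
      rw [diag_mul_of_triangular hA hAinv, hA2, one_mul] at h1
      rw [hcoe, h1]

/-- The group `T*(n,R)` of upper triangular `n × n` matrices over a linearly ordered field `R`
with positive diagonal entries, realised as a subgroup of the units of the matrix ring. -/
def Tstar (n : ℕ) (R : Type*) [Field R] [LinearOrder R] [IsStrictOrderedRing R] : Subgroup (Matrix (Fin n) (Fin n) R)ˣ where
  carrier := {A | (∀ i j : Fin n, j < i → (A : Matrix (Fin n) (Fin n) R) i j = 0) ∧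
    ∀ i : Fin n, 0 < (A : Matrix (Fin n) (Fin n) R) i i}
  one_mem' := by
    refine ⟨fun i j hij => ?_, fun i => ?_⟩
    · simp [Matrix.one_apply, (ne_of_lt hij).symm]
    · simp
  mul_mem' := by
    rintro A B ⟨hA1, hA2⟩ ⟨hB1, hB2⟩
    have hA : (A : Matrix (Fin n) (Fin n) R).BlockTriangular id := fun i j h => hA1 i j h
    have hB : (B : Matrix (Fin n) (Fin n) R).BlockTriangular id := fun i j h => hB1 i j h
    refine ⟨fun i j hij => ?_, fun i => ?_⟩
    · exact (hA.mul hB) (show (id : Fin n → Fin n) j < id i from hij)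
    · rw [Units.val_mul, diag_mul_of_triangular hA hB]
      exact mul_pos (hA2 i) (hB2 i)
  inv_mem' := by
    rintro A ⟨hA1, hA2⟩
    have hA : (A : Matrix (Fin n) (Fin n) R).BlockTriangular id := fun i j h => hA1 i j h
    haveI := A.invertible
    have hAinv : ((A : Matrix (Fin n) (Fin n) R)⁻¹).BlockTriangular id :=
      Matrix.blockTriangular_inv_of_blockTriangular hA
    have hcoe : ((A⁻¹ : (Matrix (Fin n) (Fin n) R)ˣ) : Matrix (Fin n) (Fin n) R)
        = (A : Matrix (Fin n) (Fin n) R)⁻¹ := Matrix.coe_units_inv A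
    refine ⟨fun i j hij => ?_, fun i => ?_⟩
    · rw [hcoe]; exact hAinv (show (id : Fin n → Fin n) j < id i from hij)
    · have h1 : ((A : Matrix (Fin n) (Fin n) R) * (A : Matrix (Fin n) (Fin n) R)⁻¹) i i = 1 := by
        rw [Matrix.mul_inv_of_invertible]; simp
      rw [diag_mul_of_triangular hA hAinv] at h1
      rw [hcoe]
      rcases lt_trichotomy ((A : Matrix (Fin n) (Fin n) R)⁻¹ i i) 0 with h | h | h
      · exact absurd h1 (by nlinarith [hA2 i])
      · rw [h, mul_zero] at h1; exact absurd h1 zero_ne_one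
      · exact h

/-- The last index of `Fin N` (any element of `Fin N` witnesses `0 < N`). -/
def lastOf {N : ℕ} (r : Fin N) : Fin N := ⟨N - 1, Nat.sub_lt r.pos Nat.one_pos⟩

/-- A square matrix `g` (upper triangular, with positive diagonal and bottom-right entry `1`)
is *essentially hyperbolic* if `g ≠ 1` and there is a row index `r` which is not the last row
such that `(g-1)_{r,N} ≠ 0` (where `N` is the last column) and every nonzero entry of `g - 1`
lies either in a row strictly above `r`, or at position `(r, N)`. -/
def EssentiallyHyperbolic {N : ℕ} {R : Type*} [CommRing R]
    (g : Matrix (Fin N) (Fin N) R) : Prop :=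
  g ≠ 1 ∧ ∃ r : Fin N, (r : ℕ) + 1 < N ∧ (g - 1) r (lastOf r) ≠ 0 ∧
    ∀ i j : Fin N, (g - 1) i j ≠ 0 → i < r ∨ (i = r ∧ j = lastOf r)

end Matrices

/-- The group of order-preserving additive automorphisms of a linearly ordered abelian
group `Λ`, as a subgroup of `AddAut Λ`. -/
def orderAddAut (Λ : Type*) [AddCommGroup Λ] [LinearOrder Λ] [IsOrderedAddMonoid Λ] : Subgroup (Multiplicative (AddAut Λ)) where
  carrier := {f | StrictMono (Multiplicative.toAdd f : AddAut Λ)}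
  one_mem' := strictMono_id
  mul_mem' := by
    intro f g hf hg a b hab
    exact hf (hg hab)
  inv_mem' := by
    intro f hf a b hab
    exact hf.lt_iff_lt.1 (by simpa using hab)


/-!
An order automorphism `g` of `ℚ^n_lex` is `ℚ`-linear, and for `j' < j` every multiple of
`e_{j'}` stays below `e_j`; `g` preserves this, so the leading index of `g e_j` is strictly
increasing in `j`, hence equal to `j`. Thus the matrix of `g` lies in `T*(n, ℝ)`, injectively.

Every `B ∈ T*(n, ℝ)` factors uniquely as `B = U D` with `U` unipotent and `D` positive diagonal,
so the off-diagonal entries of `U` and the logarithms of the entries of `D` are coordinates on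
`T*(n, ℝ) ≅ ℝ^{n(n+1)/2}`. Left multiplication by `A` is affine in them:
`U ↦ A U D_A⁻¹`, `log D ↦ log D + log D_A`. Order the coordinates lexicographically by their
distance from the diagonal, the diagonal ones first. Then the linear part is order preserving,
and for `A ≠ 1` it fixes every coordinate up to the first one where the translation part `A • 0`
is nonzero. So `A` moves every point in the direction of the sign of that entry, which makes it
rigid and hyperbolic.
-/

namespace OPAffineAut

variable {Λ Λ' : Type*} [AddCommGroup Λ] [LinearOrder Λ] [IsOrderedAddMonoid Λ]
  [AddCommGroup Λ'] [LinearOrder Λ'] [IsOrderedAddMonoid Λ']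

theorem apply_inv_apply (f : OPAffineAut Λ) (x : Λ) : f (f⁻¹ x) = x :=
  f.toEquiv.apply_symm_apply x

theorem rigid_and_hyperbolic_of_forall_lt_or_forall_gt {f : OPAffineAut Λ}
    (hf : (∀ x, x < f x) ∨ (∀ x, f x < x)) : f.Rigid ∧ f.Hyperbolic := by
  refine ⟨?_, fun x => hf.elim (fun h => (h x).ne') (fun h => (h x).ne)⟩
  rintro ε (rfl | rfl) ⟨x, hx⟩ y
  · rw [zpow_one] at hx ⊢
    exact hf.resolve_right (fun h => (h x).not_gt hx) y
  · rw [zpow_neg_one] at hx ⊢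
    refine hf.elim (fun h => absurd (h (f⁻¹ x)) ?_) (fun h => ?_)
    · rw [apply_inv_apply]; exact hx.not_gt
    · simpa only [apply_inv_apply] using h (f⁻¹ y)

noncomputable def ofAffine (e : Λ ≃ Λ) (L : Λ →+ Λ) (hL : StrictMono L)
    (he : ∀ x y, e x - e y = L (x - y)) : OPAffineAut Λ where
  toEquiv := e
  strictMono' x y hxy := sub_pos.1 (by rw [he]; exact map_zero L ▸ hL (sub_pos.2 hxy))
  dilation := AddEquiv.ofBijective L ⟨hL.injective, fun w =>
    ⟨e.symm (w + e 0), by simpa using (he (e.symm (w + e 0)) 0).symm⟩⟩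
  dilation_strictMono := hL
  affine := he

noncomputable def homOfAffineAction {G : Type*} [Group G] [MulAction G Λ] (L : G → Λ →+ Λ)
    (hL : ∀ g, StrictMono (L g)) (hG : ∀ (g : G) x y, g • x - g • y = L g (x - y)) :
    G →* OPAffineAut Λ where
  toFun g := ofAffine (MulAction.toPerm g) (L g) (hL g) (hG g)
  map_one' := ext' (one_smul G)
  map_mul' g h := ext' (mul_smul g h)

def congrHom (e : Λ ≃+o Λ') : OPAffineAut Λ →* OPAffineAut Λ' where
  toFun f :=
    { toEquiv := e.symm.toEquiv.trans (f.toEquiv.trans e.toEquiv)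
      strictMono' := e.strictMono.comp (f.strictMono'.comp e.symm.strictMono)
      dilation := e.symm.toAddEquiv.trans (f.dilation.trans e.toAddEquiv)
      dilation_strictMono := e.strictMono.comp (f.dilation_strictMono.comp e.symm.strictMono)
      affine := fun x y => by simp [← map_sub, f.affine] }
  map_one' := ext' fun x => e.apply_symm_apply x
  map_mul' f g := ext' fun x => by simp

theorem congrHom_apply (e : Λ ≃+o Λ') (f : OPAffineAut Λ) (x : Λ') :
    congrHom e f x = e (f (e.symm x)) := rfl

theorem congrHom_forall_lt_or_forall_gt (e : Λ ≃+o Λ') {f : OPAffineAut Λ}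
    (hf : (∀ x, x < f x) ∨ (∀ x, f x < x)) :
    (∀ y, y < congrHom e f y) ∨ (∀ y, congrHom e f y < y) := by
  refine hf.imp (fun h y => ?_) (fun h y => ?_)
  · simpa [congrHom_apply] using e.strictMono (h (e.symm y))
  · simpa [congrHom_apply] using e.strictMono (h (e.symm y))

end OPAffineAut

theorem Pi.Lex.exists_forall_lt_eq_zero_and_ne_zero {ι R : Type*} [LinearOrder ι]
    [WellFoundedLT ι] [Zero R] [LinearOrder R] {x : Lex (ι → R)} (hx : x ≠ 0) :
    ∃ s, (∀ q < s, x q = 0) ∧ x s ≠ 0 := by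
  rcases hx.lt_or_gt with ⟨s, hs, h⟩ | ⟨s, hs, h⟩
  exacts [⟨s, hs, h.ne⟩, ⟨s, fun q hq => (hs q hq).symm, h.ne'⟩]

theorem Matrix.mul_apply_eq_of_forall_ne {ι R : Type*} [Fintype ι] [NonUnitalNonAssocSemiring R]
    {M N : Matrix ι ι R} {i j : ι} (h : ∀ l, l ≠ i → M i l * N l j = 0) :
    (M * N) i j = M i i * N i j :=
  (Matrix.mul_apply).trans (Finset.sum_eq_single i (fun l _ hl => h l hl) (by simp))

namespace LexPow

variable {R : Type*} {k : ℕ}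

theorem toRevLex_apply (x : LexPow R k) (i : Fin k) : toRevLex x i = x (Fin.rev i) := rfl

theorem lt_iff [LinearOrder R] {x y : LexPow R k} :
    x < y ↔ ∃ s, (∀ q, s < q → x q = y q) ∧ x s < y s := by
  change toRevLex x < toRevLex y ↔ _
  constructor
  · rintro ⟨i, hi, hxy⟩
    refine ⟨Fin.rev i, fun q hq => ?_, hxy⟩
    simpa [toRevLex_apply] using hi (Fin.rev q) (Fin.rev_lt_iff.2 (by simpa using hq))
  · rintro ⟨s, hs, hxy⟩
    refine ⟨Fin.rev s, fun j hj => hs _ (Fin.lt_rev_iff.1 hj), ?_⟩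
    simpa [toRevLex_apply] using hxy

theorem pos_iff [LinearOrder R] [AddCommGroup R] {x : LexPow R k} :
    0 < x ↔ ∃ s, (∀ q, s < q → x q = 0) ∧ 0 < x s := by
  simp only [lt_iff, eq_comm (a := (0 : LexPow R k) _)]
  rfl

def orderAddIsoLex [LinearOrder R] [AddCommGroup R] {ι : Type*} [LinearOrder ι] [Fintype ι]
    (hι : Fintype.card ι = k) : Lex (ι → R) ≃+o LexPow R k :=
  -- `Lex` makes the least index most significant and `LexPow` the largest, hence `ιᵒᵈ`.
  let σ := Fintype.orderIsoFinOfCardEq ιᵒᵈ hι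
  let f : Lex (ι → R) → LexPow R k := fun x q => ofLex x (OrderDual.ofDual (σ q))
  have hf : StrictMono f := by
    rintro x y ⟨i, hi, hxy⟩
    refine lt_iff.2 ⟨σ.symm (OrderDual.toDual i), fun q hq => hi _ ?_, by simpa [f] using hxy⟩
    exact OrderDual.toDual_lt.1 (σ.symm_apply_lt.1 hq)
  { toFun := f
    invFun y := toLex fun i => y (σ.symm (OrderDual.toDual i))
    left_inv x := by simp only [f, OrderIso.apply_symm_apply]; rfl
    right_inv y := by funext q; simp [f]
    map_add' _ _ := rfl
    map_le_map_iff' := hf.le_iff_le }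

instance {S : Type*} [Semiring S] [AddCommGroup R] [Module S R] : Module S (LexPow R k) :=
  inferInstanceAs (Module S (Fin k → R))

@[simp] theorem smul_apply {S : Type*} [Semiring S] [AddCommGroup R] [Module S R] (c : S)
    (x : LexPow R k) (i : Fin k) : (c • x) i = c • x i := rfl

theorem eq_zero_of_forall_smul_lt [Field R] [LinearOrder R] [IsStrictOrderedRing R]
    {x y : LexPow R k} {t : Fin k} (hx : 0 < x) (hy : ∀ q, t < q → y q = 0)
    (h : ∀ c : R, c • x < y) (q : Fin k) (hq : t ≤ q) : x q = 0 := by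
  obtain ⟨s, hs, hxs⟩ := pos_iff.1 hx
  refine (lt_or_ge s q).elim (hs q) fun hqs => absurd (h ((|y s| + 1) / x s)) ?_
  refine (lt_iff.2 ⟨s, fun q' hq' => ?_, ?_⟩).not_gt
  · rw [hy q' (hq.trans_lt (hqs.trans_lt hq')), smul_apply, hs q' hq', smul_zero]
  · rw [smul_apply, smul_eq_mul, div_mul_cancel₀ _ hxs.ne']
    linarith [le_abs_self (y s)]

end LexPow

namespace orderAddAut

variable {Λ : Type*} [AddCommGroup Λ] [LinearOrder Λ] [IsOrderedAddMonoid Λ]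

instance : CoeFun (orderAddAut Λ) (fun _ => Λ → Λ) :=
  ⟨fun g x => (Multiplicative.toAdd (g : Multiplicative (AddAut Λ)) : AddAut Λ) x⟩

theorem strictMono (g : orderAddAut Λ) : StrictMono g := g.2

theorem pos_apply (g : orderAddAut Λ) {x : Λ} (hx : 0 < x) : 0 < g x := by
  simpa using strictMono g hx

variable {n : ℕ}

def toLinearMap (g : orderAddAut (LexPow ℚ n)) : (Fin n → ℚ) →ₗ[ℚ] (Fin n → ℚ) :=
  (Multiplicative.toAdd (g : Multiplicative (AddAut (LexPow ℚ n)))).toAddMonoidHom.toRatLinearMap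

def toMatrix : orderAddAut (LexPow ℚ n) →* Matrix (Fin n) (Fin n) ℚ where
  toFun g := LinearMap.toMatrix' (toLinearMap g)
  map_one' := LinearMap.toMatrix'_id
  map_mul' _ _ := by rw [← LinearMap.toMatrix'_comp]; rfl

theorem toMatrix_apply (g : orderAddAut (LexPow ℚ n)) (i j : Fin n) :
    toMatrix g i j = g (Pi.single j 1) i :=
  LinearMap.toMatrix'_apply (toLinearMap g) i j

theorem toMatrix_injective : Function.Injective (toMatrix (n := n)) := fun g h hgh =>
  have hgh' : toLinearMap g = toLinearMap h := LinearMap.toMatrix'.injective hgh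
  Subtype.ext <| AddEquiv.ext <| LinearMap.congr_fun hgh'

theorem toMatrix_upperTriangular_and_diag_pos (g : orderAddAut (LexPow ℚ n)) :
    (∀ i j, j < i → toMatrix g i j = 0) ∧ ∀ i, 0 < toMatrix g i i := by
  let e : Fin n → LexPow ℚ n := fun j => Pi.single j 1
  have he : ∀ j, 0 < e j := fun j =>
    LexPow.pos_iff.2 ⟨j, fun q hq => Pi.single_eq_of_ne hq.ne' _, by simp [e]⟩
  have he_lt : ∀ j' j, j' < j → ∀ c : ℚ, c • e j' < e j := fun j' j hjj c =>
    LexPow.lt_iff.2 ⟨j, fun q hq => by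
      rw [LexPow.smul_apply]; simp [e, (hjj.trans hq).ne', hq.ne'],
      by rw [LexPow.smul_apply]; simp [e, hjj.ne']⟩
  choose τ hτ_top hτ_pos using fun j => LexPow.pos_iff.1 (pos_apply g (he j))
  have hτ : StrictMono τ := fun j' j hjj => by
    by_contra! hle
    have hsmul : ∀ c : ℚ, c • g (e j') < g (e j) := fun c => by
      simpa [← map_rat_smul] using strictMono g (he_lt j' j hjj c)
    exact (hτ_pos j').ne' (LexPow.eq_zero_of_forall_smul_lt (pos_apply g (he j')) (hτ_top j)
      hsmul _ hle)
  have hτ_id : ∀ j, τ j = j := fun j => le_antisymm hτ.apply_le hτ.le_apply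
  refine ⟨fun i j hji => ?_, fun i => ?_⟩
  · exact (toMatrix_apply g i j).trans (hτ_top j i (by rwa [hτ_id]))
  · simpa [toMatrix_apply, hτ_id] using hτ_pos i

noncomputable def toTstar : orderAddAut (LexPow ℚ n) →* Tstar n ℝ :=
  (((Rat.castHom ℝ).mapMatrix.toMonoidHom.comp toMatrix).toHomUnits).codRestrict (Tstar n ℝ)
    fun g => by
      obtain ⟨hlow, hdiag⟩ := toMatrix_upperTriangular_and_diag_pos g
      exact ⟨fun i j hji => by simp [hlow i j hji], fun i => by simpa using hdiag i⟩

theorem toTstar_apply (g : orderAddAut (LexPow ℚ n)) (i j : Fin n) :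
    ((toTstar g : (Matrix (Fin n) (Fin n) ℝ)ˣ) : Matrix (Fin n) (Fin n) ℝ) i j =
      toMatrix g i j :=
  rfl

theorem toTstar_injective : Function.Injective (toTstar (n := n)) := fun g h hgh =>
  toMatrix_injective <| Matrix.ext fun i j => by
    have := congrArg (fun A : Tstar n ℝ => ((A : (Matrix (Fin n) (Fin n) ℝ)ˣ) i j)) hgh
    simpa [toTstar_apply] using this

end orderAddAut

/-- Positions `(row, col)` of an upper triangular `n × n` matrix, ordered first by the distance
`col - row` from the diagonal; this is what makes `X ↦ A X D⁻¹` order preserving for upper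
triangular `A` and diagonal `D`. -/
@[ext]
structure UpperIdx (n : ℕ) where
  row : Fin n
  col : Fin n
  row_le_col : row ≤ col

namespace UpperIdx

variable {n : ℕ}

local notation "Λₙ" => Lex (UpperIdx n → ℝ)

local notation "𝕄" => Matrix (Fin n) (Fin n) ℝ

def key (p : UpperIdx n) : ℕ ×ₗ ℕ := toLex ((p.col : ℕ) - p.row, (p.row : ℕ))

theorem key_injective : Function.Injective (key (n := n)) := by
  rintro ⟨i, j, hij⟩ ⟨i', j', hij'⟩ h
  simp only [key, toLex_inj, Prod.mk.injEq] at h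
  rw [Fin.le_def] at hij hij'
  ext <;> simp only <;> omega

instance : LinearOrder (UpperIdx n) := LinearOrder.lift' key key_injective

theorem lt_of_sub_lt {p q : UpperIdx n} (h : (p.col : ℕ) - p.row < (q.col : ℕ) - q.row) :
    p < q :=
  Prod.Lex.toLex_lt_toLex.2 (Or.inl h)

def equivSym2 : UpperIdx n ≃ Sym2 (Fin n) :=
  (Equiv.mk (fun p => ⟨(p.row, p.col), p.row_le_col⟩) (fun p => ⟨p.1.1, p.1.2, p.2⟩)
    (fun _ => rfl) (fun _ => rfl)).trans Sym2.sortEquiv.symm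

instance : Fintype (UpperIdx n) := Fintype.ofEquiv _ equivSym2.symm

theorem card_eq : Fintype.card (UpperIdx n) = n * (n - 1) / 2 + n := by
  rw [Fintype.card_congr equivSym2, Sym2.card, Fintype.card_fin, Nat.choose_succ_succ,
    Nat.choose_one_right, Nat.choose_two_right, add_comm]

def toStrictUpper : Λₙ →+ 𝕄 where
  toFun x := Matrix.of fun i j => if h : i < j then x ⟨i, j, h.le⟩ else 0
  map_zero' := by ext i j; simp only [Matrix.of_apply]; split_ifs <;> rfl
  map_add' x y := by
    ext i j
    simp only [Matrix.of_apply, Matrix.add_apply]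
    split_ifs
    exacts [rfl, (add_zero 0).symm]

theorem toStrictUpper_apply_of_lt (x : Λₙ) {p : UpperIdx n} (hp : p.row < p.col) :
    toStrictUpper x p.row p.col = x p :=
  dif_pos hp

theorem toStrictUpper_apply_of_ge (x : Λₙ) {i j : Fin n} (h : j ≤ i) : toStrictUpper x i j = 0 :=
  dif_neg h.not_gt

theorem blockTriangular_one_add_toStrictUpper (x : Λₙ) :
    (1 + toStrictUpper x).BlockTriangular id := fun i j (h : j < i) => by
  rw [Matrix.add_apply, Matrix.one_apply_ne h.ne', toStrictUpper_apply_of_ge x h.le, add_zero]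

end UpperIdx

namespace Tstar

open UpperIdx Matrix

variable {n : ℕ}

local notation "Λₙ" => Lex (UpperIdx n → ℝ)

local notation "𝕄" => Matrix (Fin n) (Fin n) ℝ

instance {R : Type*} [Field R] [LinearOrder R] [IsStrictOrderedRing R] :
    CoeOut (Tstar n R) (Matrix (Fin n) (Fin n) R) :=
  ⟨fun A => ((A : (Matrix (Fin n) (Fin n) R)ˣ) : Matrix (Fin n) (Fin n) R)⟩

theorem blockTriangular (A : Tstar n ℝ) : (A : 𝕄).BlockTriangular id :=
  fun i j h => A.2.1 i j h

theorem diag_pos (A : Tstar n ℝ) (i : Fin n) : 0 < (A : 𝕄) i i := A.2.2 i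

theorem coe_mul (A B : Tstar n ℝ) :
    ((A * B : Tstar n ℝ) : 𝕄) = (A : 𝕄) * (B : 𝕄) := rfl

theorem coe_one : ((1 : Tstar n ℝ) : 𝕄) = 1 := rfl

noncomputable def diagInv (M : 𝕄) : 𝕄 := diagonal fun i => (M i i)⁻¹

theorem diagInv_mul (A B : Tstar n ℝ) :
    diagInv ((A : 𝕄) * (B : 𝕄)) = diagInv (B : 𝕄) * diagInv A := by
  simp only [diagInv, diagonal_mul_diagonal,
    diag_mul_of_triangular (blockTriangular A) (blockTriangular B), mul_inv, mul_comm]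

/-- The left translation of `A` on `T*(n, ℝ) = U · D`, in the coordinates given by the
off-diagonal entries of the unipotent factor `U` and the logarithms of the diagonal of `D`. -/
noncomputable def act (A : Tstar n ℝ) (x : Λₙ) : Λₙ :=
  toLex fun p => if p.row < p.col then
      ((A : 𝕄) * (1 + toStrictUpper x) * diagInv A : 𝕄) p.row p.col
    else x p + Real.log ((A : 𝕄) p.row p.row)

theorem act_apply (A : Tstar n ℝ) (x : Λₙ) (p : UpperIdx n) :
    act A x p = if p.row < p.col then
      ((A : 𝕄) * (1 + toStrictUpper x) * diagInv A : 𝕄) p.row p.col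
    else x p + Real.log ((A : 𝕄) p.row p.row) := rfl

theorem toStrictUpper_act (A : Tstar n ℝ) (x : Λₙ) :
    toStrictUpper (act A x) = (A : 𝕄) * (1 + toStrictUpper x) * diagInv A - 1 := by
  ext i j
  rcases lt_trichotomy i j with h | rfl | h
  · rw [toStrictUpper_apply_of_lt (p := ⟨i, j, h.le⟩) _ h, act_apply, if_pos h,
      Matrix.sub_apply, one_apply_ne h.ne, sub_zero]
  · rw [toStrictUpper_apply_of_ge _ le_rfl, Matrix.sub_apply, diagInv, mul_diagonal,
      diag_mul_of_triangular (blockTriangular A) (blockTriangular_one_add_toStrictUpper x),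
      Matrix.add_apply, toStrictUpper_apply_of_ge _ le_rfl, one_apply_eq, add_zero, mul_one,
      mul_inv_cancel₀ (diag_pos A i).ne', sub_self]
  · rw [toStrictUpper_apply_of_ge _ h.le, Matrix.sub_apply, diagInv, mul_diagonal,
      ((blockTriangular A).mul (blockTriangular_one_add_toStrictUpper x)) h, one_apply_ne h.ne',
      zero_mul, sub_zero]

theorem act_mul (A B : Tstar n ℝ) (x : Λₙ) : act (A * B) x = act A (act B x) := by
  funext p
  simp only [act_apply, toStrictUpper_act, add_sub_cancel, diagInv_mul, coe_mul, Matrix.mul_assoc]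
  split_ifs
  · rfl
  · rw [diag_mul_of_triangular (blockTriangular A) (blockTriangular B),
      Real.log_mul (diag_pos A _).ne' (diag_pos B _).ne']
    ring

theorem act_one (x : Λₙ) : act 1 x = x := by
  funext p
  have hdiag : diagInv (1 : 𝕄) = 1 := by simp [diagInv]
  simp only [act_apply, coe_one, hdiag, Matrix.one_mul, Matrix.mul_one, one_apply_eq, Real.log_one]
  split_ifs with h
  · simp [one_apply_ne h.ne, toStrictUpper_apply_of_lt x h]
  · exact add_zero _

noncomputable instance : MulAction (Tstar n ℝ) Λₙ where
  smul := act
  one_smul := act_one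
  mul_smul := act_mul

theorem smul_apply (A : Tstar n ℝ) (x : Λₙ) (p : UpperIdx n) : (A • x) p = act A x p := rfl

noncomputable def linPart (A : Tstar n ℝ) : Λₙ →+ Λₙ where
  toFun z := toLex fun p => if p.row < p.col then
      ((A : 𝕄) * toStrictUpper z * diagInv A : 𝕄) p.row p.col
    else z p
  map_zero' := by
    funext p
    change (if _ then _ else 0) = (0 : ℝ)
    simp
  map_add' x y := by
    funext p
    change (if _ then _ else x p + y p) = (if _ then _ else x p) + (if _ then _ else y p)
    simp only [map_add, Matrix.mul_add, Matrix.add_mul, Matrix.add_apply]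
    split_ifs <;> rfl

theorem linPart_apply (A : Tstar n ℝ) (z : Λₙ) (p : UpperIdx n) :
    linPart A z p = if p.row < p.col then
      ((A : 𝕄) * toStrictUpper z * diagInv A : 𝕄) p.row p.col
    else z p := rfl

theorem smul_sub_smul (A : Tstar n ℝ) (x y : Λₙ) :
    A • x - A • y = linPart A (x - y) := by
  funext p
  change act A x p - act A y p = linPart A (x - y) p
  simp only [act_apply, linPart_apply, map_sub, Matrix.mul_add, Matrix.add_mul, Matrix.mul_sub,
    Matrix.sub_mul, Matrix.add_apply, Matrix.sub_apply]
  split_ifs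
  · ring
  · change _ = x p - y p
    ring

theorem linPart_apply_of_le (A : Tstar n ℝ) {z : Λₙ} {s : UpperIdx n}
    (hz : ∀ q < s, z q = 0) {p : UpperIdx n} (hp : p ≤ s) :
    linPart A z p = (A : 𝕄) p.row p.row * z p * ((A : 𝕄) p.col p.col)⁻¹ := by
  rw [linPart_apply]
  split_ifs with h
  · rw [diagInv, mul_diagonal, Matrix.mul_apply_eq_of_forall_ne, toStrictUpper_apply_of_lt z h]
    intro l hl
    rcases hl.lt_or_gt with hlr | hrl
    · rw [blockTriangular A hlr, zero_mul]
    · rcases lt_or_ge l p.col with hlc | hlc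
      · have hlt : (⟨l, p.col, hlc.le⟩ : UpperIdx n) < p := lt_of_sub_lt (by simp only; omega)
        rw [toStrictUpper_apply_of_lt (p := ⟨l, p.col, hlc.le⟩) z hlc, hz _ (hlt.trans_le hp),
          mul_zero]
      · rw [toStrictUpper_apply_of_ge z hlc, mul_zero]
  · rw [← le_antisymm p.row_le_col (not_lt.1 h), mul_comm,
      inv_mul_cancel_left₀ (diag_pos A _).ne']

theorem linPart_strictMono (A : Tstar n ℝ) : StrictMono (linPart A) := by
  refine fun x y hxy => sub_pos.1 ?_
  obtain ⟨s, hs, hxys⟩ := sub_pos.2 hxy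
  have hz : ∀ q < s, (y - x) q = 0 := fun q hq => (hs q hq).symm
  rw [← map_sub]
  refine ⟨s, fun q hq => ?_, ?_⟩
  · rw [linPart_apply_of_le A hz hq.le, hz q hq, mul_zero, zero_mul]; rfl
  · rw [linPart_apply_of_le A hz le_rfl]
    exact mul_pos (mul_pos (diag_pos A _) hxys) (inv_pos.2 (diag_pos A _))

theorem smul_zero_apply (A : Tstar n ℝ) (p : UpperIdx n) :
    (A • (0 : Λₙ)) p = if p.row < p.col then
      (A : 𝕄) p.row p.col * ((A : 𝕄) p.col p.col)⁻¹
    else Real.log ((A : 𝕄) p.row p.row) := by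
  rw [smul_apply, act_apply, map_zero, add_zero, Matrix.mul_one, diagInv, mul_diagonal]
  exact if_congr Iff.rfl rfl (zero_add _)

theorem diag_eq_one_of_smul_zero_eq_zero (A : Tstar n ℝ) {i : Fin n}
    (h : (A • (0 : Λₙ)) ⟨i, i, le_rfl⟩ = 0) : (A : 𝕄) i i = 1 := by
  rw [smul_zero_apply, if_neg (lt_irrefl i)] at h
  exact Real.eq_one_of_pos_of_log_eq_zero (diag_pos A i) h

theorem eq_zero_of_smul_zero_eq_zero (A : Tstar n ℝ) {i j : Fin n} (hij : i < j)
    (hj : (A : 𝕄) j j = 1) (h : (A • (0 : Λₙ)) ⟨i, j, hij.le⟩ = 0) : (A : 𝕄) i j = 0 := by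
  rwa [smul_zero_apply, if_pos hij, hj, inv_one, mul_one] at h

theorem smul_zero_ne_zero {A : Tstar n ℝ} (hA : A ≠ 1) : A • (0 : Λₙ) ≠ 0 := by
  refine fun h0 => hA (Subtype.ext (Units.ext (Matrix.ext fun i j => ?_)))
  have hdiag : ∀ a, (A : 𝕄) a a = 1 := fun a =>
    diag_eq_one_of_smul_zero_eq_zero A (congrFun h0 _)
  rcases lt_trichotomy i j with h | rfl | h
  · exact (eq_zero_of_smul_zero_eq_zero A h (hdiag j) (congrFun h0 _)).trans
      (one_apply_ne h.ne).symm
  · exact (hdiag i).trans (one_apply_eq i).symm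
  · exact (blockTriangular A h).trans (one_apply_ne h.ne').symm

theorem linPart_apply_eq_self (A : Tstar n ℝ) {s : UpperIdx n}
    (hs : ∀ q < s, (A • (0 : Λₙ)) q = 0) (z : Λₙ) {p : UpperIdx n} (hp : p ≤ s) :
    linPart A z p = z p := by
  rw [linPart_apply]
  split_ifs with h
  swap; · rfl
  have hdiag : ∀ a, (A : 𝕄) a a = 1 := fun a =>
    diag_eq_one_of_smul_zero_eq_zero A (hs _ ((lt_of_sub_lt (by simp only; omega)).trans_le hp))
  rw [diagInv, mul_diagonal, hdiag, inv_one, mul_one, Matrix.mul_apply_eq_of_forall_ne, hdiag,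
    one_mul, toStrictUpper_apply_of_lt z h]
  intro l hl
  rcases hl.lt_or_gt with hlr | hrl
  · rw [blockTriangular A hlr, zero_mul]
  · rcases lt_or_ge l p.col with hlc | hlc
    · rw [eq_zero_of_smul_zero_eq_zero A hrl (hdiag l)
        (hs _ ((lt_of_sub_lt (by simp only; omega)).trans_le hp)), zero_mul]
    · rw [toStrictUpper_apply_of_ge z hlc, mul_zero]

theorem forall_lt_smul_or_forall_smul_lt {A : Tstar n ℝ} (hA : A ≠ 1) :
    (∀ x : Λₙ, x < A • x) ∨ (∀ x : Λₙ, A • x < x) := by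
  obtain ⟨s, hs, hbs⟩ := Pi.Lex.exists_forall_lt_eq_zero_and_ne_zero (smul_zero_ne_zero hA)
  have hshift : ∀ (x : Λₙ) q, q ≤ s → (A • x) q = x q + (A • (0 : Λₙ)) q :=
    fun x q hq => eq_add_of_sub_eq <| (congrFun (smul_sub_smul A x 0) q).trans <| by
      rw [sub_zero]; exact linPart_apply_eq_self A hs x hq
  rcases hbs.lt_or_gt with hneg | hpos
  · refine Or.inr fun x => ⟨s, fun q hq => ?_, ?_⟩
    · rw [hshift x q hq.le, hs q hq, add_zero]
    · linarith [hshift x s le_rfl]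
  · refine Or.inl fun x => ⟨s, fun q hq => ?_, ?_⟩
    · rw [hshift x q hq.le, hs q hq, add_zero]
    · linarith [hshift x s le_rfl]

noncomputable def affineAction : Tstar n ℝ →* OPAffineAut Λₙ :=
  OPAffineAut.homOfAffineAction linPart linPart_strictMono smul_sub_smul

end Tstar

/-- The group of order-preserving group automorphisms of `ℚ^n_lex` admits
an essentially free orientation-preserving affine action on `ℝ^k_lex`, `k = n(n-1)/2 + n`. -/
theorem orderAddAut_lexPow_rat_hasEssentiallyFreeAffineAction (n : ℕ) :
    ∃ ρ : orderAddAut (LexPow ℚ n) →* OPAffineAut (LexPow ℝ (n * (n - 1) / 2 + n)),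
      AffineActionEssentiallyFree ρ := by
  let e := LexPow.orderAddIsoLex (R := ℝ) (UpperIdx.card_eq (n := n))
  refine ⟨(OPAffineAut.congrHom e).comp (Tstar.affineAction.comp orderAddAut.toTstar),
    fun g hg => ?_⟩
  have hA : orderAddAut.toTstar g ≠ 1 := (map_ne_one_iff _ orderAddAut.toTstar_injective).2 hg
  exact OPAffineAut.rigid_and_hyperbolic_of_forall_lt_or_forall_gt
    (OPAffineAut.congrHom_forall_lt_or_forall_gt e (Tstar.forall_lt_smul_or_forall_smul_lt hA))
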